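/- arXiv:1102.1545 — 7 statements merged into one kernel-verified Lean document; each statement's English description precedes it below -/
import Mathlib

section
/- Let κ ∈ ℝ, γ > 0 with κ ≤ 0 and γ > 1, or κ > 0 and γ ≥ 1. Define α₊ = ((2-γ)κ + γ√(κ² + 2γ(γ-1)))/(2κ² + γ³) and β₋ = (κ² + γ² - κ√(κ² + 2γ(γ-1)))/(2κ² + γ³). Then the set S = {(x,y) ∈ ℝ² : x > 0, y > 0, κx + γy = 1, γx² + 2y² = 2y} equals {(α₊, β₋)}. -/
/-!
Substituting `γ y = 1 - κ x` into the ellipse leaves the quadratic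
`(2κ² + γ³) x² - 2(2 - γ)κ x + 2(1 - γ) = 0`, whose discriminant is `4γ²s²` with
`s = √(κ² + 2γ(γ - 1))`, so its roots are `((2 - γ)κ ± γs) / (2κ² + γ³)`. Their product
`2(1 - γ) / (2κ² + γ³)` is nonpositive for `γ ≥ 1`, so only the larger root can be positive; the
hypotheses on `κ, γ` make it positive. On the ellipse `2y(1 - y) = γx²`, so a point
with `x ≠ 0` automatically has `y > 0`.
-/

section LineEllipse

variable {κ γ s x y : ℝ}

theorem line_ellipse_iff_quadratic (hγ : γ ≠ 0) :
    κ * x + γ * y = 1 ∧ γ * x ^ 2 + 2 * y ^ 2 = 2 * y ↔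
      y = (1 - κ * x) / γ ∧
        (2 * κ ^ 2 + γ ^ 3) * x ^ 2 - 2 * (2 - γ) * κ * x + 2 * (1 - γ) = 0 := by
  rw [eq_div_iff hγ]
  constructor
  · rintro ⟨hline, hell⟩
    exact ⟨by linear_combination hline,
      by linear_combination γ ^ 2 * hell - (2 * (γ * y + 1 - κ * x) - 2 * γ) * hline⟩
  · rintro ⟨hline, hquad⟩
    refine ⟨by linear_combination hline, mul_left_cancel₀ (pow_ne_zero 2 hγ) ?_⟩
    linear_combination hquad + (2 * (γ * y + 1 - κ * x) - 2 * γ) * hline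

theorem quadratic_eq_zero_iff_of_sq_eq (hD : 2 * κ ^ 2 + γ ^ 3 ≠ 0)
    (hs : s ^ 2 = κ ^ 2 + 2 * γ * (γ - 1)) :
    (2 * κ ^ 2 + γ ^ 3) * x ^ 2 - 2 * (2 - γ) * κ * x + 2 * (1 - γ) = 0 ↔
      x = ((2 - γ) * κ + γ * s) / (2 * κ ^ 2 + γ ^ 3) ∨
        x = ((2 - γ) * κ - γ * s) / (2 * κ ^ 2 + γ ^ 3) := by
  have hfactor : (2 * κ ^ 2 + γ ^ 3) *
      ((2 * κ ^ 2 + γ ^ 3) * x ^ 2 - 2 * (2 - γ) * κ * x + 2 * (1 - γ)) =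
        ((2 * κ ^ 2 + γ ^ 3) * x - ((2 - γ) * κ + γ * s)) *
          ((2 * κ ^ 2 + γ ^ 3) * x - ((2 - γ) * κ - γ * s)) := by
    linear_combination γ ^ 2 * hs
  rw [← mul_right_inj' hD, mul_zero, hfactor, mul_eq_zero, sub_eq_zero, sub_eq_zero,
    eq_div_iff hD, eq_div_iff hD, mul_comm x]

theorem root_numerators_mul (hs : s ^ 2 = κ ^ 2 + 2 * γ * (γ - 1)) :
    ((2 - γ) * κ + γ * s) * ((2 - γ) * κ - γ * s) = 2 * (1 - γ) * (2 * κ ^ 2 + γ ^ 3) := by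
  linear_combination -γ ^ 2 * hs

theorem smaller_root_numerator_nonpos (hγ : 1 ≤ γ) (hs0 : 0 ≤ s)
    (hs : s ^ 2 = κ ^ 2 + 2 * γ * (γ - 1)) : (2 - γ) * κ - γ * s ≤ 0 := by
  have hprod : ((2 - γ) * κ + γ * s) * ((2 - γ) * κ - γ * s) ≤ 0 := by
    rw [root_numerators_mul hs]
    exact mul_nonpos_of_nonpos_of_nonneg (by linarith) (by positivity)
  have hγs : 0 ≤ γ * s := by positivity
  nlinarith

theorem larger_root_numerator_pos (h : 1 < γ ∨ (0 < κ ∧ 1 ≤ γ)) (hs0 : 0 ≤ s)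
    (hs : s ^ 2 = κ ^ 2 + 2 * γ * (γ - 1)) : 0 < (2 - γ) * κ + γ * s := by
  rcases h with hγ | ⟨hκ, hγ⟩
  · have hprod : ((2 - γ) * κ + γ * s) * ((2 - γ) * κ - γ * s) < 0 := by
      rw [root_numerators_mul hs]
      exact mul_neg_of_neg_of_pos (by linarith) (by positivity)
    have hγs : 0 ≤ γ * s := by positivity
    nlinarith
  · have hκs : κ ≤ s := abs_le_of_sq_le_sq' (by nlinarith) hs0 |>.2
    nlinarith

theorem pos_of_ellipse (hγ : 0 < γ) (hx : x ≠ 0) (hell : γ * x ^ 2 + 2 * y ^ 2 = 2 * y) :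
    0 < y := by
  have : 0 < γ * x ^ 2 := by positivity
  nlinarith

theorem snd_eq_of_fst_eq_larger_root (hγ : γ ≠ 0) (hD : 2 * κ ^ 2 + γ ^ 3 ≠ 0) :
    (1 - κ * (((2 - γ) * κ + γ * s) / (2 * κ ^ 2 + γ ^ 3))) / γ =
      (κ ^ 2 + γ ^ 2 - κ * s) / (2 * κ ^ 2 + γ ^ 3) := by
  rw [div_eq_div_iff hγ hD, mul_div_assoc', one_sub_div hD, div_mul_eq_mul_div, div_eq_iff hD]
  ring

end LineEllipse

theorem stmt_0_general (κ γ : ℝ)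
    (h : (κ ≤ 0 ∧ 1 < γ) ∨ (0 < κ ∧ 1 ≤ γ)) :
    {p : ℝ × ℝ | 0 < p.1 ∧ 0 < p.2 ∧ κ * p.1 + γ * p.2 = 1 ∧
        γ * p.1 ^ 2 + 2 * p.2 ^ 2 = 2 * p.2} =
      {(((2 - γ) * κ + γ * Real.sqrt (κ ^ 2 + 2 * γ * (γ - 1))) / (2 * κ ^ 2 + γ ^ 3),
        (κ ^ 2 + γ ^ 2 - κ * Real.sqrt (κ ^ 2 + 2 * γ * (γ - 1))) / (2 * κ ^ 2 + γ ^ 3))} := by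
  have hγ : 1 ≤ γ := by rcases h with ⟨-, h⟩ | ⟨-, h⟩ <;> linarith
  have hγ0 : 0 < γ := by linarith
  have hD : 0 < 2 * κ ^ 2 + γ ^ 3 := by positivity
  have hs : √(κ ^ 2 + 2 * γ * (γ - 1)) ^ 2 = κ ^ 2 + 2 * γ * (γ - 1) :=
    Real.sq_sqrt (by nlinarith)
  have hsnd := snd_eq_of_fst_eq_larger_root hγ0.ne' hD.ne' (s := √(κ ^ 2 + 2 * γ * (γ - 1)))
  ext ⟨x, y⟩
  simp only [Set.mem_ofPred_eq, Set.mem_singleton_iff, Prod.mk.injEq]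
  constructor
  · rintro ⟨hx, -, hpt⟩
    obtain ⟨rfl, hquad⟩ := (line_ellipse_iff_quadratic hγ0.ne').1 hpt
    obtain rfl | rfl := (quadratic_eq_zero_iff_of_sq_eq hD.ne' hs).1 hquad
    · exact ⟨rfl, hsnd⟩
    · exact absurd hx <| not_lt.2 <| div_nonpos_of_nonpos_of_nonneg
        (smaller_root_numerator_nonpos hγ (Real.sqrt_nonneg _) hs) hD.le
  · rintro ⟨rfl, rfl⟩
    have hx := div_pos (larger_root_numerator_pos (h.imp And.right id) (Real.sqrt_nonneg _) hs) hD
    have hpt := (line_ellipse_iff_quadratic hγ0.ne').2 ⟨hsnd.symm, (quadratic_eq_zero_iff_of_sq_eq hD.ne' hs).2 (Or.inl rfl)⟩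
    exact ⟨hx, pos_of_ellipse hγ0 hx.ne' hpt.2, hpt⟩

theorem stmt_0 (κ γ : ℝ) (hγ : 0 < γ)
    (h : (κ ≤ 0 ∧ 1 < γ) ∨ (0 < κ ∧ 1 ≤ γ)) :
    {p : ℝ × ℝ | 0 < p.1 ∧ 0 < p.2 ∧ κ * p.1 + γ * p.2 = 1 ∧
        γ * p.1 ^ 2 + 2 * p.2 ^ 2 = 2 * p.2} =
      {(((2 - γ) * κ + γ * Real.sqrt (κ ^ 2 + 2 * γ * (γ - 1))) / (2 * κ ^ 2 + γ ^ 3),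
        (κ ^ 2 + γ ^ 2 - κ * Real.sqrt (κ ^ 2 + 2 * γ * (γ - 1))) / (2 * κ ^ 2 + γ ^ 3))} :=
  stmt_0_general κ γ h
end

section
/- Let (κ,γ) satisfy either (κ ≤ 0 and γ > 1) or (κ > 0 and γ ≥ 1) or (0 < γ < 1 and κ > √(2γ(1-γ))). Define D = κ² + 2γ(γ-1) and β₋ = (κ² + γ² - κ√D)/(2κ² + γ³). Then (2-γ)β₋ < 1 and (1-2γ)β₋ < 1. -/
theorem stmt_8 (κ γ : ℝ)
    (h : (κ ≤ 0 ∧ 1 < γ) ∨ (0 < κ ∧ 1 ≤ γ) ∨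
      (0 < γ ∧ γ < 1 ∧ Real.sqrt (2 * γ * (1 - γ)) < κ)) :
    (2 - γ) * ((κ ^ 2 + γ ^ 2 - κ * Real.sqrt (κ ^ 2 + 2 * γ * (γ - 1))) /
        (2 * κ ^ 2 + γ ^ 3)) < 1 ∧
    (1 - 2 * γ) * ((κ ^ 2 + γ ^ 2 - κ * Real.sqrt (κ ^ 2 + 2 * γ * (γ - 1))) /
        (2 * κ ^ 2 + γ ^ 3)) < 1 := by
  set s := Real.sqrt (κ ^ 2 + 2 * γ * (γ - 1)) with hs
  have hγ : 0 < γ := by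
    rcases h with ⟨_, h1⟩ | ⟨_, h1⟩ | ⟨h1, _, _⟩ <;> linarith
  have hD : 0 ≤ κ ^ 2 + 2 * γ * (γ - 1) := by
    rcases h with ⟨_, h1⟩ | ⟨_, h1⟩ | ⟨h1, h2, h3⟩
    · nlinarith [sq_nonneg κ]
    · nlinarith [sq_nonneg κ]
    · have h0 : Real.sqrt (2 * γ * (1 - γ)) ^ 2 = 2 * γ * (1 - γ) := by
        rw [Real.sq_sqrt]; nlinarith
      have h4 : 0 ≤ Real.sqrt (2 * γ * (1 - γ)) := Real.sqrt_nonneg _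
      nlinarith
  have hs2 : s ^ 2 = κ ^ 2 + 2 * γ * (γ - 1) := Real.sq_sqrt hD
  have hs0 : 0 ≤ s := Real.sqrt_nonneg _
  have hden : 0 < 2 * κ ^ 2 + γ ^ 3 := by positivity
  have key1 : (2 - γ) * (κ ^ 2 + γ ^ 2 - κ * s) < 2 * κ ^ 2 + γ ^ 3 := by
    -- difference = s*(γ*s + (2-γ)*κ)
    rcases h with ⟨h1, h2⟩ | ⟨h1, h2⟩ | ⟨h1, h2, h3⟩
    · have hsk : -κ ≤ s := by nlinarith
      have hspos : 0 < s := by nlinarith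
      nlinarith [mul_nonneg hs0 (neg_nonneg.mpr h1), mul_pos hspos hspos]
    · have hsk : κ ≤ s := by nlinarith
      have hsp : 0 < s := lt_of_lt_of_le h1 hsk
      nlinarith [mul_nonneg (mul_nonneg hγ.le (sub_nonneg.mpr hsk)) hs0, mul_pos h1 hsp]
    · have hk : 0 < κ := lt_of_le_of_lt (Real.sqrt_nonneg _) h3
      have hsk : s < κ := by
        have h0 : Real.sqrt (2 * γ * (1 - γ)) ^ 2 = 2 * γ * (1 - γ) := by
          rw [Real.sq_sqrt]; nlinarith
        nlinarith [Real.sqrt_nonneg (2 * γ * (1 - γ))]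
      have hspos : 0 < s := by
        have h0 : Real.sqrt (2 * γ * (1 - γ)) ^ 2 = 2 * γ * (1 - γ) := by
          rw [Real.sq_sqrt]; nlinarith
        nlinarith [Real.sqrt_nonneg (2 * γ * (1 - γ))]
      nlinarith [mul_pos hspos hk, mul_pos hspos hspos]
  have key2 : (1 - 2 * γ) * (κ ^ 2 + γ ^ 2 - κ * s) < 2 * κ ^ 2 + γ ^ 3 := by
    rcases h with ⟨h1, h2⟩ | ⟨h1, h2⟩ | ⟨h1, h2, h3⟩
    · have hsk : -κ ≤ s := by nlinarith
      nlinarith [mul_nonneg hs0 (neg_nonneg.mpr h1), sq_nonneg (s + κ), sq_nonneg (s - γ)]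
    · have hsk : κ ≤ s := by nlinarith
      nlinarith [sq_nonneg (s - κ), sq_nonneg (s - γ), mul_pos h1 h1, mul_nonneg hs0 h1.le,
        mul_nonneg (mul_nonneg hs0 h1.le) hγ.le, sq_nonneg (κ - γ)]
    · have hk : 0 < κ := lt_of_le_of_lt (Real.sqrt_nonneg _) h3
      have hsk : s < κ := by
        have h0 : Real.sqrt (2 * γ * (1 - γ)) ^ 2 = 2 * γ * (1 - γ) := by
          rw [Real.sq_sqrt]; nlinarith
        nlinarith [Real.sqrt_nonneg (2 * γ * (1 - γ))]
      nlinarith [mul_pos hk hk, sq_nonneg (s - κ), mul_nonneg hs0 hk.le, sq_nonneg (κ - γ)]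
  constructor
  · have e : (2 - γ) * ((κ ^ 2 + γ ^ 2 - κ * s) / (2 * κ ^ 2 + γ ^ 3))
        = ((2 - γ) * (κ ^ 2 + γ ^ 2 - κ * s)) / (2 * κ ^ 2 + γ ^ 3) := by ring
    rw [e, div_lt_one hden]; exact key1
  · have e : (1 - 2 * γ) * ((κ ^ 2 + γ ^ 2 - κ * s) / (2 * κ ^ 2 + γ ^ 3))
        = ((1 - 2 * γ) * (κ ^ 2 + γ ^ 2 - κ * s)) / (2 * κ ^ 2 + γ ^ 3) := by ring
    rw [e, div_lt_one hden]; exact key2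
end

section
/- Let 0 < γ < 1 and κ > √(2γ(1-γ)). Define D = κ² + 2γ(γ-1) > 0 and β₊ = (κ² + γ² + κ√D)/(2κ² + γ³). Then 1 < (2-γ)β₊ < 2 and (1-2γ)β₊ < 1. -/
/-!
Write `s = √D`, `N = κ² + γ² + κ s` and `Q = 2κ² + γ³`, so that `β₊ = N / Q`. The hypothesis on `κ`
gives `0 < s < κ`, and eliminating `2γ(1 - γ) = κ² - s²` turns each inequality into a polynomial
one with a visibly signed difference, e.g. `(2 - γ) N - Q = s ((2 - γ) κ - γ s)`.
-/

lemma sqrt_discriminant_pos_and_lt {κ γ : ℝ} (hγ0 : 0 < γ) (hγ1 : γ < 1)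
    (hκ : Real.sqrt (2 * γ * (1 - γ)) < κ) :
    0 < Real.sqrt (κ ^ 2 + 2 * γ * (γ - 1)) ∧ Real.sqrt (κ ^ 2 + 2 * γ * (γ - 1)) < κ := by
  have hκ0 : 0 < κ := (Real.sqrt_nonneg _).trans_lt hκ
  have hκ2 : 2 * γ * (1 - γ) < κ ^ 2 := (Real.sqrt_lt' hκ0).mp hκ
  refine ⟨Real.sqrt_pos.mpr (by linarith), (Real.sqrt_lt' hκ0).mpr ?_⟩
  nlinarith [mul_pos hγ0 (sub_pos.mpr hγ1)]

section

variable {κ γ s : ℝ} (hγ0 : 0 < γ) (hγ1 : γ < 1) (hs0 : 0 < s) (hsκ : s < κ)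
  (hs2 : s ^ 2 = κ ^ 2 + 2 * γ * (γ - 1))
include hγ0 hγ1 hs0 hsκ hs2

lemma one_lt_two_sub_mul_div :
    1 < (2 - γ) * ((κ ^ 2 + γ ^ 2 + κ * s) / (2 * κ ^ 2 + γ ^ 3)) := by
  have hκ0 : 0 < κ := hs0.trans hsκ
  rw [mul_div_assoc', one_lt_div (by positivity)]
  have hgap : (2 - γ) * (κ ^ 2 + γ ^ 2 + κ * s) - (2 * κ ^ 2 + γ ^ 3)
      = s * ((2 - γ) * κ - γ * s) := by linear_combination γ * hs2
  have hlin : 0 < (2 - γ) * κ - γ * s := by nlinarith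
  linarith [mul_pos hs0 hlin]

lemma two_sub_mul_div_lt_two :
    (2 - γ) * ((κ ^ 2 + γ ^ 2 + κ * s) / (2 * κ ^ 2 + γ ^ 3)) < 2 := by
  have hκ0 : 0 < κ := hs0.trans hsκ
  rw [mul_div_assoc', div_lt_iff₀ (by positivity)]
  have hgap : 2 * (2 * κ ^ 2 + γ ^ 3) - (2 - γ) * (κ ^ 2 + γ ^ 2 + κ * s)
      = (2 - γ) * κ * (κ - s) + 2 * γ * s ^ 2 + γ ^ 2 * (2 - γ) := by
    linear_combination (-2 * γ) * hs2
  have : 0 < (2 - γ) * κ * (κ - s) + 2 * γ * s ^ 2 + γ ^ 2 * (2 - γ) := by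
    have : 0 < 2 - γ := by linarith
    have : 0 < κ - s := by linarith
    positivity
  linarith

lemma one_sub_two_mul_mul_div_lt_one :
    (1 - 2 * γ) * ((κ ^ 2 + γ ^ 2 + κ * s) / (2 * κ ^ 2 + γ ^ 3)) < 1 := by
  have hκ0 : 0 < κ := hs0.trans hsκ
  rw [mul_div_assoc', div_lt_one (by positivity)]
  rcases le_or_gt γ (1 / 2) with h | h
  · have hgap : 2 * κ ^ 2 + γ ^ 3 - (1 - 2 * γ) * (κ ^ 2 + γ ^ 2 + κ * s)
        = (1 - 2 * γ) * κ * (κ - s) + 4 * γ * s ^ 2 + γ ^ 2 * (7 - 5 * γ) := by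
      linear_combination (-4 * γ) * hs2
    have : 0 < (1 - 2 * γ) * κ * (κ - s) + 4 * γ * s ^ 2 + γ ^ 2 * (7 - 5 * γ) := by
      have : 0 ≤ 1 - 2 * γ := by linarith
      have : 0 < κ - s := by linarith
      have : 0 < 7 - 5 * γ := by linarith
      positivity
    linarith
  · have hgap : 2 * κ ^ 2 + γ ^ 3 - (1 - 2 * γ) * (κ ^ 2 + γ ^ 2 + κ * s)
        = (2 * γ - 1) * κ * s + (1 + 2 * γ) * s ^ 2 + γ * (2 - γ) * (1 + γ) := by
      linear_combination (-(1 + 2 * γ)) * hs2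
    have : 0 < (2 * γ - 1) * κ * s + (1 + 2 * γ) * s ^ 2 + γ * (2 - γ) * (1 + γ) := by
      have : 0 < 2 * γ - 1 := by linarith
      have : 0 < 2 - γ := by linarith
      positivity
    linarith

end

theorem stmt_9 (κ γ : ℝ) (hγ0 : 0 < γ) (hγ1 : γ < 1)
    (hκ : Real.sqrt (2 * γ * (1 - γ)) < κ) :
    1 < (2 - γ) * ((κ ^ 2 + γ ^ 2 + κ * Real.sqrt (κ ^ 2 + 2 * γ * (γ - 1))) /
        (2 * κ ^ 2 + γ ^ 3)) ∧
    (2 - γ) * ((κ ^ 2 + γ ^ 2 + κ * Real.sqrt (κ ^ 2 + 2 * γ * (γ - 1))) /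
        (2 * κ ^ 2 + γ ^ 3)) < 2 ∧
    (1 - 2 * γ) * ((κ ^ 2 + γ ^ 2 + κ * Real.sqrt (κ ^ 2 + 2 * γ * (γ - 1))) /
        (2 * κ ^ 2 + γ ^ 3)) < 1 := by
  obtain ⟨hs0, hsκ⟩ := sqrt_discriminant_pos_and_lt hγ0 hγ1 hκ
  have hs2 := Real.sq_sqrt (Real.sqrt_pos.mp hs0).le
  exact ⟨one_lt_two_sub_mul_div hγ0 hγ1 hs0 hsκ hs2, two_sub_mul_div_lt_two hγ0 hγ1 hs0 hsκ hs2,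
    one_sub_two_mul_mul_div_lt_one hγ0 hγ1 hs0 hsκ hs2⟩
end

section
/- Let (κ,γ) satisfy either (κ ≤ 0 and γ > 1) or (κ > 0 and γ ≥ 1) or (0 < γ < 1 and κ > √(2γ(1-γ))). Define D = κ² + 2γ(γ-1), α₊ = ((2-γ)κ + γ√D)/(2κ² + γ³), β₋ = (κ² + γ² - κ√D)/(2κ² + γ³). Then α₊² + β₋² = 1 if and only if 0 < γ < 1 and κ = (1/2)(γ+2)√(1-γ). -/
/-!
The point `(α₊, β₋)` lies on the line `κx + γy = 1` and on the ellipse `γx² + 2y² = 2y`, with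
`α₊ > 0`. Subtracting `γ` times the circle equation from the ellipse equation leaves
`((2 - γ)y - γ)(y - 1) = 0`, and `y = 1` would force `x = 0`; so the only point of the ellipse on
the unit circle in the open right half-plane is `(2√(1-γ)/(2-γ), γ/(2-γ))`, which needs `γ < 1`.
It lies on the line exactly when `κ = κ_c(γ)`. Conversely, at `κ = κ_c(γ)` the discriminant is the
perfect square `(1-γ)(2-γ)²/4`, and the closed forms of `α₊, β₋` reduce to that point.
-/

open Real

noncomputable section

namespace EllipseCoupling

def disc (κ γ : ℝ) : ℝ := κ ^ 2 + 2 * γ * (γ - 1)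

def alphaPlus (κ γ : ℝ) : ℝ := ((2 - γ) * κ + γ * √(disc κ γ)) / (2 * κ ^ 2 + γ ^ 3)

def betaMinus (κ γ : ℝ) : ℝ := (κ ^ 2 + γ ^ 2 - κ * √(disc κ γ)) / (2 * κ ^ 2 + γ ^ 3)

def criticalCoupling (γ : ℝ) : ℝ := (1 / 2) * (γ + 2) * √(1 - γ)

def Admissible (κ γ : ℝ) : Prop :=
  (κ ≤ 0 ∧ 1 < γ) ∨ (0 < κ ∧ 1 ≤ γ) ∨ (0 < γ ∧ γ < 1 ∧ √(2 * γ * (1 - γ)) < κ)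

variable {α β κ γ : ℝ}

theorem mul_alphaPlus_add_mul_betaMinus (hden : 2 * κ ^ 2 + γ ^ 3 ≠ 0) :
    κ * alphaPlus κ γ + γ * betaMinus κ γ = 1 := by
  unfold alphaPlus betaMinus
  rw [← mul_div_assoc, ← mul_div_assoc, ← add_div, div_eq_one_iff_eq hden]
  ring

theorem alphaPlus_betaMinus_mem_ellipse (hD : 0 ≤ disc κ γ) (hden : 2 * κ ^ 2 + γ ^ 3 ≠ 0) :
    γ * alphaPlus κ γ ^ 2 + 2 * betaMinus κ γ ^ 2 = 2 * betaMinus κ γ := by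
  have hs : √(disc κ γ) ^ 2 = disc κ γ := sq_sqrt hD
  unfold alphaPlus betaMinus
  field_simp
  unfold disc at hs ⊢
  linear_combination (γ ^ 3 + 2 * κ ^ 2) * hs

namespace Admissible

theorem gamma_pos (h : Admissible κ γ) : 0 < γ := by
  rcases h with ⟨_, hγ⟩ | ⟨_, hγ⟩ | ⟨hγ, _, _⟩ <;> linarith

theorem den_pos (h : Admissible κ γ) : 0 < 2 * κ ^ 2 + γ ^ 3 := by
  have := h.gamma_pos
  positivity

theorem disc_nonneg (h : Admissible κ γ) : 0 ≤ disc κ γ := by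
  unfold disc
  rcases h with ⟨_, _⟩ | ⟨_, _⟩ | ⟨hγ0, hγ1, hκ⟩
  · nlinarith
  · nlinarith
  · have h0 : 0 ≤ 2 * γ * (1 - γ) := by nlinarith
    nlinarith [sq_sqrt h0, sqrt_nonneg (2 * γ * (1 - γ))]

theorem alphaPlus_pos (h : Admissible κ γ) : 0 < alphaPlus κ γ := by
  refine div_pos ?_ h.den_pos
  have hs2 : √(disc κ γ) ^ 2 = κ ^ 2 + 2 * γ * (γ - 1) := sq_sqrt h.disc_nonneg
  have hs0 : 0 ≤ √(disc κ γ) := sqrt_nonneg _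
  set s := √(disc κ γ)
  rcases h with ⟨hκ, hγ⟩ | ⟨hκ, hγ⟩ | ⟨hγ0, hγ1, hκ⟩
  · nlinarith [sq_nonneg (s + κ), sq_nonneg (s - κ)]
  · nlinarith [sq_nonneg (s + κ), sq_nonneg (s - κ), sq_nonneg (γ * s - (γ - 2) * κ), mul_pos hκ hκ]
  · have : 0 < κ := (sqrt_nonneg _).trans_lt hκ
    nlinarith

end Admissible

theorem circle_inter_ellipse (hα : 0 < α) (hcirc : α ^ 2 + β ^ 2 = 1)
    (hell : γ * α ^ 2 + 2 * β ^ 2 = 2 * β) :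
    γ < 1 ∧ (2 - γ) * β = γ ∧ (2 - γ) * α = 2 * √(1 - γ) := by
  have hfactor : ((2 - γ) * β - γ) * (β - 1) = 0 := by
    linear_combination hell - γ * hcirc
  have hβ1 : β - 1 ≠ 0 := by
    intro hβ
    nlinarith [pow_pos hα 2]
  have hβ : (2 - γ) * β = γ := by
    linear_combination (mul_eq_zero.mp hfactor).resolve_right hβ1
  have hγ2 : 2 - γ ≠ 0 := by
    intro h2
    rw [h2] at hβ
    linarith
  have hsq : ((2 - γ) * α) ^ 2 = 4 * (1 - γ) := by
    linear_combination (2 - γ) ^ 2 * hcirc - ((2 - γ) * β + γ) * hβ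
  have hγ1 : γ < 1 := by
    nlinarith [sq_pos_of_ne_zero (mul_ne_zero hγ2 hα.ne')]
  refine ⟨hγ1, hβ, ?_⟩
  have hu2 : √(1 - γ) ^ 2 = 1 - γ := sq_sqrt (by linarith)
  have hαγ : 0 < (2 - γ) * α := mul_pos (by linarith) hα
  nlinarith [sqrt_nonneg (1 - γ)]

theorem eq_criticalCoupling_of_mem_circle (hα : 0 < α) (hline : κ * α + γ * β = 1)
    (hell : γ * α ^ 2 + 2 * β ^ 2 = 2 * β) (hcirc : α ^ 2 + β ^ 2 = 1) :
    γ < 1 ∧ κ = criticalCoupling γ := by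
  obtain ⟨hγ1, hβ, hα'⟩ := circle_inter_ellipse hα hcirc hell
  refine ⟨hγ1, ?_⟩
  have hu0 : 0 < √(1 - γ) := sqrt_pos.mpr (by linarith)
  have hu2 : √(1 - γ) ^ 2 = 1 - γ := sq_sqrt (by linarith)
  have hκ : κ * (2 * √(1 - γ)) = (γ + 2) * √(1 - γ) ^ 2 := by
    rw [← hα', hu2]
    linear_combination (2 - γ) * hline - γ * hβ
  unfold criticalCoupling
  nlinarith

theorem sqrt_disc_criticalCoupling (hγ1 : γ < 1) :
    √(disc (criticalCoupling γ) γ) = (2 - γ) / 2 * √(1 - γ) := by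
  have hu2 : √(1 - γ) ^ 2 = 1 - γ := sq_sqrt (by linarith)
  rw [show disc (criticalCoupling γ) γ = ((2 - γ) / 2 * √(1 - γ)) ^ 2 by
    unfold disc criticalCoupling
    linear_combination (γ + 2) ^ 2 / 4 * hu2 - ((2 - γ) / 2) ^ 2 * hu2]
  exact sqrt_sq (by have := sqrt_nonneg (1 - γ); nlinarith)

theorem alphaPlus_criticalCoupling (hγ0 : 0 < γ) (hγ1 : γ < 1) :
    alphaPlus (criticalCoupling γ) γ = 2 * √(1 - γ) / (2 - γ) := by
  have hu2 : √(1 - γ) ^ 2 = 1 - γ := sq_sqrt (by linarith)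
  rw [alphaPlus, sqrt_disc_criticalCoupling hγ1, div_eq_div_iff (by positivity) (by linarith),
    criticalCoupling]
  linear_combination (-(√(1 - γ) * (γ + 2) ^ 2)) * hu2

theorem betaMinus_criticalCoupling (hγ0 : 0 < γ) (hγ1 : γ < 1) :
    betaMinus (criticalCoupling γ) γ = γ / (2 - γ) := by
  have hu2 : √(1 - γ) ^ 2 = 1 - γ := sq_sqrt (by linarith)
  rw [betaMinus, sqrt_disc_criticalCoupling hγ1, div_eq_div_iff (by positivity) (by linarith),
    criticalCoupling]
  linear_combination (-(γ ^ 2 * (γ + 2))) * hu2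

theorem criticalPoint_mem_circle (hγ1 : γ < 1) :
    (2 * √(1 - γ) / (2 - γ)) ^ 2 + (γ / (2 - γ)) ^ 2 = 1 := by
  have hu2 : √(1 - γ) ^ 2 = 1 - γ := sq_sqrt (by linarith)
  have : 2 - γ ≠ 0 := by linarith
  field_simp
  linear_combination 4 * hu2

end EllipseCoupling

end

open EllipseCoupling in
theorem stmt_13 (κ γ : ℝ)
    (h : (κ ≤ 0 ∧ 1 < γ) ∨ (0 < κ ∧ 1 ≤ γ) ∨
      (0 < γ ∧ γ < 1 ∧ Real.sqrt (2 * γ * (1 - γ)) < κ)) :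
    ((((2 - γ) * κ + γ * Real.sqrt (κ ^ 2 + 2 * γ * (γ - 1))) /
        (2 * κ ^ 2 + γ ^ 3)) ^ 2 +
     ((κ ^ 2 + γ ^ 2 - κ * Real.sqrt (κ ^ 2 + 2 * γ * (γ - 1))) /
        (2 * κ ^ 2 + γ ^ 3)) ^ 2 = 1) ↔
      (0 < γ ∧ γ < 1 ∧ κ = (1 / 2) * (γ + 2) * Real.sqrt (1 - γ)) := by
  have h : Admissible κ γ := h
  change alphaPlus κ γ ^ 2 + betaMinus κ γ ^ 2 = 1 ↔ 0 < γ ∧ γ < 1 ∧ κ = criticalCoupling γ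
  constructor
  · intro hcirc
    exact ⟨h.gamma_pos, eq_criticalCoupling_of_mem_circle h.alphaPlus_pos
      (mul_alphaPlus_add_mul_betaMinus h.den_pos.ne')
      (alphaPlus_betaMinus_mem_ellipse h.disc_nonneg h.den_pos.ne') hcirc⟩
  · rintro ⟨hγ0, hγ1, rfl⟩
    rw [alphaPlus_criticalCoupling hγ0 hγ1, betaMinus_criticalCoupling hγ0 hγ1]
    exact criticalPoint_mem_circle hγ1
end

section
/- Let (κ,γ) lie in K₁ = {κ ≤ 0, γ > 1} ∪ {κ ≥ 1, γ > 0} ∪ {0 < κ < 1, γ > γ_c(κ)}, where γ_c is the inverse of κ_c(γ) = (1/2)(γ+2)√(1-γ) on (0,1) (extended so that the condition means κ > κ_c(γ) when 0 < γ < 1). Define D = κ² + 2γ(γ-1), α₊ = ((2-γ)κ + γ√D)/(2κ² + γ³), β₋ = (κ² + γ² - κ√D)/(2κ² + γ³). Then α₊² + β₋² < 1. -/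
/-!
Clearing the common denominator `Q = 2κ² + γ³`, and writing `s = √D`, one finds
`Q² - ((2-γ)κ + γs)² - (κ² + γ² - κs)² = A + 2κ s D` with a polynomial `A` in `κ, γ`.
The sign of `A + 2κ s D` is controlled by the factorization
`A² - 4κ²D³ = (γ-1)³ (4κ² - (γ+2)²(1-γ)) Q²`:
for `γ > 1` the rational part `A` is positive and dominates `|2κ s D|`, while for `γ < 1` the
irrational part dominates exactly when `4κ² > (γ+2)²(1-γ)`, i.e. when `κ > κ_c(γ)`.
-/

namespace AlphaBetaUnitDisk

def D (κ γ : ℝ) : ℝ := κ ^ 2 + 2 * γ * (γ - 1)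

def A (κ γ : ℝ) : ℝ :=
  2 * κ ^ 4 + 2 * κ ^ 2 * (γ - 1) * (2 * γ ^ 2 - γ + 2) + γ ^ 3 * (γ - 1) ^ 2 * (γ + 2)

lemma denom_sq_sub_num_sq {κ γ s : ℝ} (hs : s ^ 2 = D κ γ) :
    (2 * κ ^ 2 + γ ^ 3) ^ 2 - (((2 - γ) * κ + γ * s) ^ 2 + (κ ^ 2 + γ ^ 2 - κ * s) ^ 2) =
      A κ γ + 2 * κ * s * D κ γ := by
  unfold A D at *
  linear_combination (-(γ ^ 2 + κ ^ 2)) * hs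

lemma A_sq_sub_eq (κ γ : ℝ) :
    A κ γ ^ 2 - 4 * κ ^ 2 * D κ γ ^ 3 =
      (γ - 1) ^ 3 * (4 * κ ^ 2 - (γ + 2) ^ 2 * (1 - γ)) * (2 * κ ^ 2 + γ ^ 3) ^ 2 := by
  unfold A D
  ring

lemma A_pos {κ γ : ℝ} (hγ : 1 ≤ γ) (h : κ ≠ 0 ∨ 1 < γ) : 0 < A κ γ := by
  have hquad : 0 < 2 * γ ^ 2 - γ + 2 := by nlinarith [sq_nonneg (γ - 1)]
  have hmid : 0 ≤ 2 * κ ^ 2 * (γ - 1) * (2 * γ ^ 2 - γ + 2) := by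
    have : 0 ≤ γ - 1 := by linarith
    positivity
  have hlast : 0 ≤ γ ^ 3 * (γ - 1) ^ 2 * (γ + 2) := by
    have : 0 ≤ γ := by linarith
    positivity
  unfold A
  rcases h with hκ | hγ1
  · have : 0 < 2 * κ ^ 4 := by positivity
    linarith
  · have : 0 < γ ^ 3 * (γ - 1) ^ 2 * (γ + 2) := by
      have : 0 < γ - 1 := by linarith
      have : 0 < γ := by linarith
      positivity
    nlinarith [pow_two_nonneg (κ ^ 2)]

lemma D_nonneg_of_one_le (κ : ℝ) {γ : ℝ} (hγ : 1 ≤ γ) : 0 ≤ D κ γ := by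
  unfold D
  nlinarith [sq_nonneg κ]

lemma D_nonneg_of_critical_lt {κ γ : ℝ} (hγ : γ < 1)
    (hc : (γ + 2) ^ 2 * (1 - γ) < 4 * κ ^ 2) :
    0 ≤ D κ γ := by
  have : 0 ≤ (1 - γ) * (γ - 2) ^ 2 := mul_nonneg (by linarith) (sq_nonneg _)
  unfold D
  nlinarith

lemma defect_pos_of_one_le_of_pos {κ γ : ℝ} (hγ : 1 ≤ γ) (hκ : 0 < κ) :
    0 < A κ γ + 2 * κ * √(D κ γ) * D κ γ := by
  have := A_pos hγ (Or.inl hκ.ne')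
  have : 0 ≤ 2 * κ * √(D κ γ) * D κ γ := by
    have := D_nonneg_of_one_le κ hγ
    positivity
  linarith

lemma defect_pos_of_one_lt (κ : ℝ) {γ : ℝ} (hγ : 1 < γ) :
    0 < A κ γ + 2 * κ * √(D κ γ) * D κ γ := by
  have hA := A_pos (κ := κ) hγ.le (Or.inr hγ)
  have hD := D_nonneg_of_one_le κ hγ.le
  have hlt : (2 * κ * √(D κ γ) * D κ γ) ^ 2 < A κ γ ^ 2 := by
    have hfac :
        0 < (γ - 1) ^ 3 * (4 * κ ^ 2 - (γ + 2) ^ 2 * (1 - γ)) * (2 * κ ^ 2 + γ ^ 3) ^ 2 := by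
      have : 0 < γ - 1 := by linarith
      have : 0 < 4 * κ ^ 2 - (γ + 2) ^ 2 * (1 - γ) := by
        have : 0 < (γ + 2) ^ 2 * (γ - 1) := by positivity
        nlinarith [sq_nonneg κ]
      have : 0 < 2 * κ ^ 2 + γ ^ 3 := by positivity
      positivity
    have hsq : (2 * κ * √(D κ γ) * D κ γ) ^ 2 = 4 * κ ^ 2 * D κ γ ^ 3 := by
      rw [mul_pow, mul_pow, mul_pow, Real.sq_sqrt hD]
      ring
    linarith [A_sq_sub_eq κ γ]
  linarith [neg_abs_le (2 * κ * √(D κ γ) * D κ γ), abs_lt_of_sq_lt_sq hlt hA.le]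

lemma defect_pos_of_critical_lt {κ γ : ℝ} (hγ0 : 0 < γ) (hγ : γ < 1) (hκ : 0 < κ)
    (hc : (γ + 2) ^ 2 * (1 - γ) < 4 * κ ^ 2) :
    0 < A κ γ + 2 * κ * √(D κ γ) * D κ γ := by
  have hD := D_nonneg_of_critical_lt hγ hc
  have hx : 0 ≤ 2 * κ * √(D κ γ) * D κ γ := by positivity
  have hlt : A κ γ ^ 2 < (2 * κ * √(D κ γ) * D κ γ) ^ 2 := by
    have hfac :
        0 < (1 - γ) ^ 3 * (4 * κ ^ 2 - (γ + 2) ^ 2 * (1 - γ)) * (2 * κ ^ 2 + γ ^ 3) ^ 2 := by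
      have : 0 < 1 - γ := by linarith
      have : 0 < 4 * κ ^ 2 - (γ + 2) ^ 2 * (1 - γ) := by linarith
      positivity
    have hsq : (2 * κ * √(D κ γ) * D κ γ) ^ 2 = 4 * κ ^ 2 * D κ γ ^ 3 := by
      rw [mul_pow, mul_pow, mul_pow, Real.sq_sqrt hD]
      ring
    nlinarith [A_sq_sub_eq κ γ]
  linarith [neg_abs_le (A κ γ), abs_lt_of_sq_lt_sq hlt hx]

lemma critical_lt_of_sqrt {κ γ : ℝ} (hγ0 : 0 < γ) (hγ : γ < 1)
    (hc : (1 / 2) * (γ + 2) * √(1 - γ) < κ) :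
    (γ + 2) ^ 2 * (1 - γ) < 4 * κ ^ 2 := by
  have h0 : 0 ≤ (γ + 2) * √(1 - γ) := by positivity
  have := pow_lt_pow_left₀ (show (γ + 2) * √(1 - γ) < 2 * κ by linarith) h0 two_ne_zero
  rw [mul_pow, Real.sq_sqrt (by linarith), mul_pow] at this
  linarith

lemma critical_lt_of_one_le {κ γ : ℝ} (hγ : 0 < γ) (hκ : 1 ≤ κ) :
    (γ + 2) ^ 2 * (1 - γ) < 4 * κ ^ 2 := by
  nlinarith [pow_pos hγ 3]

lemma D_nonneg_and_defect_pos {κ γ : ℝ} (hγ : 0 < γ)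
    (h : (κ ≤ 0 ∧ 1 < γ) ∨ (1 ≤ κ) ∨
      (0 < κ ∧ κ < 1 ∧ (1 ≤ γ ∨ (γ < 1 ∧ (1 / 2) * (γ + 2) * √(1 - γ) < κ)))) :
    0 ≤ D κ γ ∧ 0 < A κ γ + 2 * κ * √(D κ γ) * D κ γ := by
  rcases h with ⟨-, hγ1⟩ | hκ | ⟨hκ, -, hγ1 | ⟨hγ1, hc⟩⟩
  · exact ⟨D_nonneg_of_one_le κ hγ1.le, defect_pos_of_one_lt κ hγ1⟩
  · rcases le_or_gt 1 γ with hγ1 | hγ1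
    · exact ⟨D_nonneg_of_one_le κ hγ1, defect_pos_of_one_le_of_pos hγ1 (by linarith)⟩
    · have hc := critical_lt_of_one_le hγ hκ
      exact ⟨D_nonneg_of_critical_lt hγ1 hc,
        defect_pos_of_critical_lt hγ hγ1 (by linarith) hc⟩
  · exact ⟨D_nonneg_of_one_le κ hγ1, defect_pos_of_one_le_of_pos hγ1 hκ⟩
  · have hc := critical_lt_of_sqrt hγ hγ1 hc
    exact ⟨D_nonneg_of_critical_lt hγ1 hc, defect_pos_of_critical_lt hγ hγ1 hκ hc⟩

end AlphaBetaUnitDisk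

open AlphaBetaUnitDisk in
theorem stmt_14 (κ γ : ℝ) (hγ : 0 < γ)
    (h : (κ ≤ 0 ∧ 1 < γ) ∨ (1 ≤ κ) ∨
      (0 < κ ∧ κ < 1 ∧ (1 ≤ γ ∨ (γ < 1 ∧ (1 / 2) * (γ + 2) * Real.sqrt (1 - γ) < κ)))) :
    (((2 - γ) * κ + γ * Real.sqrt (κ ^ 2 + 2 * γ * (γ - 1))) /
        (2 * κ ^ 2 + γ ^ 3)) ^ 2 +
    ((κ ^ 2 + γ ^ 2 - κ * Real.sqrt (κ ^ 2 + 2 * γ * (γ - 1))) /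
        (2 * κ ^ 2 + γ ^ 3)) ^ 2 < 1 := by
  obtain ⟨hD, hpos⟩ := D_nonneg_and_defect_pos hγ h
  have hQ : 0 < 2 * κ ^ 2 + γ ^ 3 := by positivity
  rw [show κ ^ 2 + 2 * γ * (γ - 1) = D κ γ from rfl, div_pow, div_pow, ← add_div,
    div_lt_one (pow_pos hQ 2)]
  linarith [denom_sq_sub_num_sq (Real.sq_sqrt hD)]
end

section
/- Let 0 < γ < 1 and κ = (1/2)(γ+2)√(1-γ). Define E₁ = {(x,y) : x > 0, y > 0, κx + γy ≥ 1} and E₂ = {(x,y) : x > 0, y > 0, γx² + 2y² ≥ 2y, x² + y² ≤ 1}. Then E₁ ∩ E₂ = {(2√(1-γ)/(2-γ), γ/(2-γ))}. -/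
set_option maxHeartbeats 1000000


theorem stmt_15 (κ γ : ℝ) (hγ0 : 0 < γ) (hγ1 : γ < 1)
    (hκ : κ = (1 / 2) * (γ + 2) * Real.sqrt (1 - γ)) :
    {p : ℝ × ℝ | 0 < p.1 ∧ 0 < p.2 ∧ 1 ≤ κ * p.1 + γ * p.2} ∩
      {p : ℝ × ℝ | 0 < p.1 ∧ 0 < p.2 ∧ 2 * p.2 ≤ γ * p.1 ^ 2 + 2 * p.2 ^ 2 ∧
        p.1 ^ 2 + p.2 ^ 2 ≤ 1} =
      {(2 * Real.sqrt (1 - γ) / (2 - γ), γ / (2 - γ))} := by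
  have h1γ : (0:ℝ) < 1 - γ := by linarith
  have hs2 : Real.sqrt (1 - γ) ^ 2 = 1 - γ := Real.sq_sqrt h1γ.le
  have hs0 : 0 < Real.sqrt (1 - γ) := Real.sqrt_pos.mpr h1γ
  set s := Real.sqrt (1 - γ) with hs_def
  have h2γ : (0:ℝ) < 2 - γ := by linarith
  have hκ0 : 0 < κ := by rw [hκ]; positivity
  have hκ2 : κ ^ 2 = (γ + 2) ^ 2 * (1 - γ) / 4 := by
    rw [hκ, show ((1:ℝ)/2 * (γ+2) * s)^2 = (γ+2)^2 * s^2 / 4 by ring, hs2]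
  have hκα : κ * (2 * s / (2 - γ)) = (γ + 2) * (1 - γ) / (2 - γ) := by
    rw [hκ, show (1:ℝ)/2 * (γ+2) * s * (2 * s / (2-γ)) = (γ+2) * s^2 / (2-γ) by ring, hs2]
  have hα2 : (2 * s / (2 - γ)) ^ 2 = (4 - 4*γ) / (2 - γ)^2 := by
    rw [div_pow, show (2*s)^2 = 4 * s^2 by ring, hs2]; ring
  ext ⟨x, y⟩
  simp only [Set.mem_inter_iff, Set.mem_setOf_eq, Set.mem_singleton_iff, Prod.mk.injEq]
  constructor
  · rintro ⟨⟨hx, hy, hline⟩, -, -, hell, hcirc⟩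
    have hy1 : y < 1 := by nlinarith
    -- ellipse + circle give y ≤ γ/(2-γ)
    have hyβ : (2 - γ) * y ≤ γ := by nlinarith
    have hγy : γ * y < 1 := by nlinarith
    have hκx : 1 - γ * y ≤ κ * x := by linarith
    -- line + circle give  (1-γy)^2 ≤ κ^2 (1-y^2)
    have hf : 0 ≤ (γ + 2) ^ 2 * (1 - γ) * (1 - y ^ 2) - 4 * (1 - γ * y) ^ 2 := by
      have h1 : (1 - γ * y) ^ 2 ≤ (κ * x) ^ 2 := pow_le_pow_left₀ (by linarith) hκx 2
      have h2 : 0 ≤ κ ^ 2 * ((1 - y ^ 2) - x ^ 2) :=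
        mul_nonneg (sq_nonneg κ) (by linarith)
      have h3 : κ ^ 2 * (1 - y ^ 2) = (γ + 2) ^ 2 * (1 - γ) * (1 - y ^ 2) / 4 := by
        rw [hκ2]; ring
      nlinarith [h1, h2, h3]
    -- which forces y ≥ γ/(2-γ)
    have hyβ' : γ ≤ (2 - γ) * y := by
      by_contra hcon
      push_neg at hcon
      have hC : (0:ℝ) < 4 + γ^2 - γ^3 := by nlinarith
      have t1 : (0:ℝ) < (4 + γ^2 - γ^3) * (γ - (2 - γ) * y) :=
        mul_pos hC (by linarith)
      have t2 : (0:ℝ) < 2*γ*(1-γ)*(2-γ)*(2+γ) := by positivity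
      have h2 : (4 + γ^2 - γ^3) * (2 - γ) * y < γ * (3 + γ) * (2 - γ)^2 := by
        linarith [t1, t2]
      have hP : (0:ℝ) < (γ - (2-γ)*y) * (γ*(3+γ)*(2-γ)^2 - (4+γ^2-γ^3)*(2-γ)*y) :=
        mul_pos (by linarith) (by linarith)
      linarith [mul_nonneg hf (sq_nonneg (2 - γ)), hP]
    have hyeq : y = γ / (2 - γ) := by
      field_simp
      linarith
    -- now pin x
    have hxα : x = 2 * s / (2 - γ) := by
      have he2 : 1 - (γ/(2-γ))^2 = (4 - 4*γ)/(2-γ)^2 := by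
        field_simp; ring
      have hx2 : x ^ 2 ≤ (2 * s / (2 - γ)) ^ 2 := by
        rw [hα2, ← he2]
        rw [hyeq] at hcirc
        linarith
      have hα0 : 0 < 2 * s / (2 - γ) := by positivity
      have hxle : x ≤ 2 * s / (2 - γ) := by nlinarith
      have hxge : 2 * s / (2 - γ) ≤ x := by
        have h1 : 1 - γ * y = (γ + 2) * (1 - γ) / (2 - γ) := by
          rw [hyeq]; field_simp; ring
        have h2 : κ * (2 * s / (2 - γ)) ≤ κ * x := by
          rw [hκα, ← h1]; linarith
        exact le_of_mul_le_mul_left h2 hκ0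
      linarith
    exact ⟨hxα, hyeq⟩
  · rintro ⟨hx, hy⟩
    subst hx hy
    have hα0 : 0 < 2 * s / (2 - γ) := by positivity
    have hβ0 : 0 < γ / (2 - γ) := by positivity
    refine ⟨⟨hα0, hβ0, ?_⟩, hα0, hβ0, ?_, ?_⟩
    · have h1 : (γ + 2) * (1 - γ) / (2 - γ) + γ * (γ / (2 - γ)) = 1 := by
        field_simp; ring
      rw [hκα]; linarith
    · rw [hα2]
      have h2 : 2 * (γ / (2 - γ)) = γ * ((4 - 4*γ) / (2 - γ)^2) + 2 * (γ / (2 - γ))^2 := by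
        field_simp; ring
      linarith
    · rw [hα2]
      have h3 : (4 - 4*γ) / (2 - γ)^2 + (γ / (2 - γ))^2 = 1 := by
        field_simp; ring
      linarith
end

section
/- Let 0 < γ < 1 and 0 < κ < (1/2)(γ+2)√(1-γ). Define E₁(κ) = {(x,y) : x > 0, y > 0, κx + γy ≥ 1} and E₂ = {(x,y) : x > 0, y > 0, γx² + 2y² ≥ 2y, x² + y² ≤ 1}. Then E₁(κ) ∩ E₂ is empty. -/
theorem stmt_17 (κ γ : ℝ) (hγ0 : 0 < γ) (hγ1 : γ < 1) (hκ0 : 0 < κ)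
    (hκ : κ < (1 / 2) * (γ + 2) * Real.sqrt (1 - γ)) :
    {p : ℝ × ℝ | 0 < p.1 ∧ 0 < p.2 ∧ 1 ≤ κ * p.1 + γ * p.2} ∩
      {p : ℝ × ℝ | 0 < p.1 ∧ 0 < p.2 ∧ 2 * p.2 ≤ γ * p.1 ^ 2 + 2 * p.2 ^ 2 ∧
        p.1 ^ 2 + p.2 ^ 2 ≤ 1} = ∅ := by
  ext p
  simp only [Set.mem_inter_iff, Set.mem_setOf_eq, Set.mem_empty_iff_false, iff_false]
  rintro ⟨⟨hx, hy, hline⟩, ⟨-, -, h1, h2⟩⟩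
  set x := p.1
  set y := p.2
  set s := Real.sqrt (1 - γ) with hs_def
  have hs0 : 0 < s := Real.sqrt_pos.mpr (by linarith)
  have hs2 : s ^ 2 = 1 - γ := Real.sq_sqrt (by linarith)
  -- y < 1
  have hy1 : y < 1 := by nlinarith [sq_nonneg x, sq_nonneg y, mul_pos hx hx]
  -- (2-γ) y ≤ γ
  have hyb : (2 - γ) * y ≤ γ := by nlinarith [mul_pos hy hy]
  -- 1 - γ y > 0
  have hpos : 0 < 1 - γ * y := by nlinarith
  -- key: ((γ+2)/2) s x ≤ 1 - γ y
  have hkey : (1 / 2) * (γ + 2) * s * x ≤ 1 - γ * y := by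
    have hsq : ((1 / 2) * (γ + 2) * s * x) ^ 2 ≤ (1 - γ * y) ^ 2 := by
      have hx2 : x ^ 2 ≤ 1 - y ^ 2 := by linarith
      have hv : 0 ≤ γ * (3 + γ) * (2 - γ) - (4 + γ ^ 2 - γ ^ 3) * y := by
        nlinarith [mul_nonneg (sub_nonneg.mpr hyb) hγ0.le]
      have hG : 0 ≤ 4 * (1 - γ * y) ^ 2 - (γ + 2) ^ 2 * (1 - γ) * (1 - y ^ 2) := by
        nlinarith [mul_nonneg (sub_nonneg.mpr hyb) hv]
      nlinarith [mul_le_mul_of_nonneg_left hx2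
        (by nlinarith [sq_nonneg (γ + 2)] : (0:ℝ) ≤ (γ + 2) ^ 2 * (1 - γ))]
    have hL : 0 ≤ (1 / 2) * (γ + 2) * s * x := by positivity
    nlinarith
  have : κ * x < (1 / 2) * (γ + 2) * s * x := by
    exact mul_lt_mul_of_pos_right hκ hx
  linarith
end
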